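/- Let f be the Carleson-Chang test function: f(t) = t/2 on [0,2], f(t) = sqrt(t-1) on [2, e^2+1], f(t) = e on [e^2+1, infinity). Then integral_0^infty exp(f(t)^2 - t) dt > 1 + e. -/

import Mathlib

/-! On `[0, 2]` the integrand is `e⁻¹ · exp ((1 - t/2)²)`, on `[2, e² + 1]` it is the constant
`e⁻¹`, and beyond it is `exp (e² - t)`. The last two pieces contribute `(e² - 1)/e + 1/e = e`
exactly, so it remains to see that the first exceeds `1`, i.e. `∫₀¹ exp (u²) du > e/2`; this follows
from `exp x ≥ 1 + x + x²/2`, which gives `∫₀¹ exp (u²) du ≥ 43/30`. -/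

open MeasureTheory Real Set

theorem integrableOn_exp_sub_Ioi (c b : ℝ) : IntegrableOn (fun t => exp (c - t)) (Ioi b) := by
  have h : IntegrableOn (fun t => exp c * exp (-1 * t)) (Ioi b) :=
    (exp_neg_integrableOn_Ioi b one_pos).const_mul (exp c)
  simpa only [sub_eq_add_neg, exp_add, neg_one_mul] using h

theorem integral_exp_sub_Ioi (c b : ℝ) : ∫ t in Ioi b, exp (c - t) = exp (c - b) := by
  simp only [sub_eq_add_neg, exp_add, integral_const_mul, integral_exp_neg_Ioi]

theorem integral_Ioi_eq_interval_add_interval_add_Ioi {g : ℝ → ℝ} {a b c : ℝ} (hbc : b ≤ c)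
    (hg₁ : IntervalIntegrable g volume a b) (hg₂ : IntervalIntegrable g volume b c)
    (hg₃ : IntegrableOn g (Ioi c)) :
    ∫ t in Ioi a, g t = (∫ t in a..b, g t) + (∫ t in b..c, g t) + ∫ t in Ioi c, g t := by
  have hb : IntegrableOn g (Ioi b) :=
    Ioc_union_Ioi_eq_Ioi hbc ▸ ((intervalIntegrable_iff_integrableOn_Ioc_of_le hbc).1 hg₂).union hg₃
  rw [← intervalIntegral.integral_interval_add_Ioi' hg₁ hb,
    ← intervalIntegral.integral_interval_add_Ioi' hg₂ hg₃, add_assoc]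

theorem le_integral_exp_sq_zero_one : (43 / 30 : ℝ) ≤ ∫ u in (0:ℝ)..1, exp (u ^ 2) := by
  have hpoly : ∫ u in (0:ℝ)..1, (1 + u ^ 2 + (u ^ 2) ^ 2 / 2) = 43 / 30 := by
    norm_num [← pow_mul, intervalIntegral.integral_add, intervalIntegral.integral_div]
  rw [← hpoly]
  exact intervalIntegral.integral_mono_on zero_le_one
    (Continuous.intervalIntegrable (by fun_prop) _ _) (Continuous.intervalIntegrable (by fun_prop) _ _)
    fun u _ => quadratic_le_exp_of_nonneg (sq_nonneg u)

theorem carleson_chang_test_function_integral (f : ℝ → ℝ)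
    (h1 : ∀ t ∈ Set.Icc (0:ℝ) 2, f t = t / 2)
    (h2 : ∀ t ∈ Set.Icc (2:ℝ) (Real.exp 1 ^ 2 + 1), f t = Real.sqrt (t - 1))
    (h3 : ∀ t : ℝ, Real.exp 1 ^ 2 + 1 ≤ t → f t = Real.exp 1) :
    (∫ t in Set.Ioi (0:ℝ), Real.exp ((f t) ^ 2 - t)) > 1 + Real.exp 1 := by
  have he : 2 ≤ exp 1 := by linarith [add_one_le_exp (1 : ℝ)]
  have hcut : (2 : ℝ) ≤ exp 1 ^ 2 + 1 := by nlinarith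
  have eq1 : EqOn (fun t => exp (f t ^ 2 - t)) (fun t => exp (-1) * exp ((1 - t / 2) ^ 2))
      (uIcc 0 2) := fun t ht => by
    rw [uIcc_of_le zero_le_two] at ht
    simp only [h1 t ht, ← exp_add]
    ring_nf
  have eq2 : EqOn (fun t => exp (f t ^ 2 - t)) (fun _ => exp (-1)) (uIcc 2 (exp 1 ^ 2 + 1)) :=
    fun t ht => by
    rw [uIcc_of_le hcut] at ht
    simp only [h2 t ht, sq_sqrt (by linarith [ht.1] : (0:ℝ) ≤ t - 1)]
    ring_nf
  have eq3 : EqOn (fun t => exp (f t ^ 2 - t)) (fun t => exp (exp 1 ^ 2 - t))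
      (Ioi (exp 1 ^ 2 + 1)) := fun t ht => by
    simp only [h3 t ht.le]
  rw [integral_Ioi_eq_interval_add_interval_add_Ioi hcut
    (((by fun_prop : Continuous _).continuousOn.congr eq1).intervalIntegrable)
    ((continuousOn_const.congr eq2).intervalIntegrable)
    ((integrableOn_exp_sub_Ioi _ _).congr_fun eq3.symm measurableSet_Ioi),
    intervalIntegral.integral_congr eq1, intervalIntegral.integral_congr eq2,
    setIntegral_congr_fun measurableSet_Ioi eq3, intervalIntegral.integral_const_mul,
    intervalIntegral.integral_comp_sub_div (fun u => exp (u ^ 2)) two_ne_zero,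
    intervalIntegral.integral_const, integral_exp_sub_Ioi]
  simp only [show exp 1 ^ 2 - (exp 1 ^ 2 + 1) = -1 by ring, show (1 : ℝ) - 2 / 2 = 0 by norm_num,
    zero_div, sub_zero, smul_eq_mul]
  have hinv : exp (-1) * exp 1 = 1 := by rw [← exp_add]; norm_num
  nlinarith [le_integral_exp_sq_zero_one, exp_one_lt_d9, exp_pos (-1)]
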